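/- arXiv:2412.09728 — 9 statements merged into one kernel-verified Lean document; each statement's English description precedes it below -/
import Mathlib

section
/- For all x, y ∈ ℓ¹(ℤ₃): if Σh(x + y) = Σh(x) + Σh(y), then Σh(z(x,y)) = 0. -/
/-- `Σh` for signed Egyptian fractions: the sum of `v(x_j)/(j+1)` where
`v : ZMod 3 → ℤ` is the balanced representative map (`valMinAbs` sends
`0 ↦ 0`, `1 ↦ 1`, `2 ↦ -1`). -/
noncomputable def sigmah3 (x : ℕ+ →₀ ZMod 3) : ℚ :=
  ∑ j ∈ x.support, ((x j).valMinAbs : ℚ) / ((j : ℕ) + 1)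

/-- The vector `z(x,y)` with `z_j = x_j` when `x_j = y_j` and `z_j = 0` otherwise. -/
noncomputable def zvec (x y : ℕ+ →₀ ZMod 3) : ℕ+ →₀ ZMod 3 :=
  Finsupp.zipWith (fun a b => if a = b then a else 0) (by simp) x y

lemma sigmah3_eq_sum (x : ℕ+ →₀ ZMod 3) (s : Finset ℕ+) (hs : x.support ⊆ s) :
    sigmah3 x = ∑ j ∈ s, ((x j).valMinAbs : ℚ) / ((j : ℕ) + 1) := by
  apply Finset.sum_subset hs
  intro j _ hj
  simp [Finsupp.notMem_support_iff.mp hj]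

lemma vkey (a b : ZMod 3) :
    (a + b).valMinAbs = a.valMinAbs + b.valMinAbs
      - 3 * ((if a = b then a else (0 : ZMod 3)).valMinAbs) := by
  revert a b; decide

theorem stmt2 (x y : ℕ+ →₀ ZMod 3)
    (h : sigmah3 (x + y) = sigmah3 x + sigmah3 y) :
    sigmah3 (zvec x y) = 0 := by
  set s := x.support ∪ y.support ∪ (x + y).support ∪ (zvec x y).support with hsdef
  have hx : x.support ⊆ s :=
    (Finset.subset_union_left.trans Finset.subset_union_left).trans Finset.subset_union_left
  have hy : y.support ⊆ s :=
    (Finset.subset_union_right.trans Finset.subset_union_left).trans Finset.subset_union_left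
  have hxy : (x + y).support ⊆ s :=
    Finset.subset_union_right.trans Finset.subset_union_left
  have hz : (zvec x y).support ⊆ s := Finset.subset_union_right
  rw [sigmah3_eq_sum (x + y) s hxy, sigmah3_eq_sum x s hx, sigmah3_eq_sum y s hy] at h
  have hzeq := sigmah3_eq_sum (zvec x y) s hz
  have key : (-3 : ℚ) * sigmah3 (zvec x y)
      = ∑ j ∈ s, ((((x + y) j).valMinAbs : ℚ) / ((j : ℕ) + 1)
          - ((x j).valMinAbs : ℚ) / ((j : ℕ) + 1)
          - ((y j).valMinAbs : ℚ) / ((j : ℕ) + 1)) := by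
    rw [hzeq, Finset.mul_sum]
    apply Finset.sum_congr rfl
    intro j _
    have hj : ((j : ℕ) : ℚ) + 1 ≠ 0 := by positivity
    have h1 := vkey (x j) (y j)
    have h2 : ((zvec x y) j) = if x j = y j then x j else 0 := by
      simp [zvec]
    rw [h2]
    have h3 : (((x + y) j).valMinAbs : ℚ)
        = (x j).valMinAbs + (y j).valMinAbs
          - 3 * ((if x j = y j then x j else 0 : ZMod 3).valMinAbs : ℚ) := by
      rw [Finsupp.add_apply, h1]; push_cast; ring
    rw [h3]
    field_simp
    ring
  rw [Finset.sum_sub_distrib, Finset.sum_sub_distrib, h] at key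
  linarith [key]
end

section
/- Let n ≥ 0 and let T_n = {(s,t) ∈ ℝ² : 0 ≤ s, 0 ≤ t, s + t ≤ 2^{-n}}. Then every point (s,t) ∈ T_n admits binary representations a of s and b of t such that a_j = b_j = 0 for all j ≤ n and a_{n+1} · b_{n+1} = 0. -/
open scoped Pointwise

/-- `a : ℕ+ → ℤ` is a binary representation of `t ∈ [0,1]`: all digits are in
`{0,1}` and `t = ∑_{j=1}^∞ a_j 2^{-j}`. -/
def IsBinRep (a : ℕ+ → ℤ) (t : ℝ) : Prop :=
  (∀ j : ℕ+, a j = 0 ∨ a j = 1) ∧ t = ∑' j : ℕ+, (a j : ℝ) / 2 ^ (j : ℕ)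

/-- The initial triangle `T₀` with vertices `(0,0)`, `(1,0)`, `(0,1)`. -/
def T0 : Set (ℝ × ℝ) := {p | 0 ≤ p.1 ∧ 0 ≤ p.2 ∧ p.1 + p.2 ≤ 1}

/-- The decreasing sequence of sets whose intersection is the Sierpinski triangle. -/
noncomputable def S : ℕ → Set (ℝ × ℝ)
  | 0 => T0
  | n + 1 =>
      ((1 / 2 : ℝ) • S n) ∪
      ((fun p => p + ((1 / 2 : ℝ), (0 : ℝ))) '' ((1 / 2 : ℝ) • S n)) ∪
      ((fun p => p + ((0 : ℝ), (1 / 2 : ℝ))) '' ((1 / 2 : ℝ) • S n))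

/-- The Sierpinski triangle. -/
noncomputable def sierpinskiT : Set (ℝ × ℝ) := ⋂ n, S n

/-- The `k`-th digit (0-indexed) of the greedy binary expansion. -/
noncomputable def dig (x : ℝ) (k : ℕ) : ℤ := ⌊x * 2 ^ (k + 1)⌋ - 2 * ⌊x * 2 ^ k⌋

/-- The equivalence `ℕ ≃ ℕ+`, `k ↦ k+1`. -/
def natPNatEquiv : ℕ ≃ ℕ+ where
  toFun k := ⟨k + 1, k.succ_pos⟩
  invFun j := (j : ℕ) - 1
  left_inv k := by simp
  right_inv j := by
    have := j.pos
    apply PNat.coe_injective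
    simp
    omega

lemma dig_mem (x : ℝ) (k : ℕ) : dig x k = 0 ∨ dig x k = 1 := by
  have h : x * 2 ^ (k + 1) = 2 * (x * 2 ^ k) := by ring
  have hf := Int.floor_le (x * 2 ^ k)
  have hf' := Int.lt_floor_add_one (x * 2 ^ k)
  have h1 : (2 : ℤ) * ⌊x * 2 ^ k⌋ ≤ ⌊x * 2 ^ (k + 1)⌋ := by
    rw [h]
    exact Int.le_floor.mpr (by push_cast; linarith)
  have h2 : ⌊x * 2 ^ (k + 1)⌋ < 2 * ⌊x * 2 ^ k⌋ + 2 := by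
    rw [h]
    apply Int.floor_lt.mpr
    push_cast
    linarith
  unfold dig
  omega

lemma dig_partial_sum (x : ℝ) (N : ℕ) :
    ∑ k ∈ Finset.range N, (dig x k : ℝ) / 2 ^ (k + 1) = ⌊x * 2 ^ N⌋ / 2 ^ N - ⌊x⌋ := by
  induction N with
  | zero => simp
  | succ N ih =>
    rw [Finset.sum_range_succ, ih]
    unfold dig
    have h2 : (2 : ℝ) ^ N ≠ 0 := by positivity
    have h2' : (2 : ℝ) ^ (N + 1) ≠ 0 := by positivity
    push_cast
    field_simp
    ring

lemma hasSum_dig (x : ℝ) (h0 : 0 ≤ x) (h1 : x < 1) :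
    HasSum (fun k : ℕ => (dig x k : ℝ) / 2 ^ (k + 1)) x := by
  have hnn : ∀ k : ℕ, 0 ≤ (dig x k : ℝ) / 2 ^ (k + 1) := by
    intro k
    rcases dig_mem x k with h | h <;> rw [h] <;> positivity
  rw [hasSum_iff_tendsto_nat_of_nonneg hnn]
  have hx0 : ⌊x⌋ = 0 := Int.floor_eq_zero_iff.mpr ⟨h0, h1⟩
  have hEq : ∀ N : ℕ, ∑ k ∈ Finset.range N, (dig x k : ℝ) / 2 ^ (k + 1)
      = ⌊x * 2 ^ N⌋ / 2 ^ N := by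
    intro N
    rw [dig_partial_sum, hx0]
    simp
  simp only [hEq]
  have hlow : Filter.Tendsto (fun N : ℕ => x - (1 / 2 : ℝ) ^ N) Filter.atTop (nhds x) := by
    have := tendsto_pow_atTop_nhds_zero_of_lt_one (by norm_num : (0:ℝ) ≤ 1/2)
      (by norm_num : (1/2:ℝ) < 1)
    simpa using (tendsto_const_nhds.sub this)
  apply tendsto_of_tendsto_of_tendsto_of_le_of_le hlow tendsto_const_nhds
  · intro N
    simp only
    have hp : (0:ℝ) < 2 ^ N := by positivity
    have hfl := Int.lt_floor_add_one (x * 2 ^ N)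
    have hone : ((1:ℝ)/2) ^ N * 2 ^ N = 1 := by
      rw [div_pow, one_pow]; field_simp
    rw [le_div_iff₀ hp]
    nlinarith
  · intro N
    simp only
    have hp : (0:ℝ) < 2 ^ N := by positivity
    rw [div_le_iff₀ hp]
    exact Int.floor_le (x * 2 ^ N)

lemma exists_rep_lt (m : ℕ) (x : ℝ) (h0 : 0 ≤ x) (h1 : x < 1 / 2 ^ m) :
    ∃ a : ℕ+ → ℤ, IsBinRep a x ∧ ∀ j : ℕ+, (j : ℕ) ≤ m → a j = 0 := by
  refine ⟨fun j => dig x ((j : ℕ) - 1), ⟨fun j => dig_mem x _, ?_⟩, ?_⟩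
  · have hx1 : x < 1 := lt_of_lt_of_le h1 (by
      rw [div_le_one (by positivity)]
      exact one_le_pow₀ (by norm_num))
    have hs : HasSum (fun j : ℕ+ => (dig x ((j : ℕ) - 1) : ℝ) / 2 ^ (j : ℕ)) x := by
      rw [← natPNatEquiv.hasSum_iff]
      have : (fun j : ℕ+ => (dig x ((j : ℕ) - 1) : ℝ) / 2 ^ (j : ℕ)) ∘ natPNatEquiv
          = fun k : ℕ => (dig x k : ℝ) / 2 ^ (k + 1) := by
        funext k
        show (dig x ((k + 1 : ℕ) - 1) : ℝ) / 2 ^ (k + 1) = _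
        simp
      rw [this]
      exact hasSum_dig x h0 hx1
    exact hs.tsum_eq.symm
  · intro j hj
    have hj1 := j.pos
    have hfz : ∀ i : ℕ, i ≤ m → ⌊x * 2 ^ i⌋ = 0 := by
      intro i hi
      apply Int.floor_eq_zero_iff.mpr
      constructor
      · positivity
      · show x * 2 ^ i < 1
        calc x * 2 ^ i < (1 / 2 ^ m) * 2 ^ i := by
              apply mul_lt_mul_of_pos_right h1 (by positivity)
          _ ≤ 1 := by
              rw [div_mul_eq_mul_div, one_mul, div_le_one (by positivity)]
              exact pow_le_pow_right₀ (by norm_num) hi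
    show dig x ((j : ℕ) - 1) = 0
    unfold dig
    rw [hfz ((j : ℕ) - 1 + 1) (by omega), hfz ((j : ℕ) - 1) (by omega)]
    ring

/-- Digits of the representation `0.0…0111…` of `2^{-m}`. -/
def bnd (m : ℕ) (j : ℕ+) : ℤ := if m + 1 ≤ (j : ℕ) then 1 else 0

lemma hasSum_boundary (m : ℕ) :
    HasSum (fun j : ℕ+ => ((bnd m j : ℤ) : ℝ) / 2 ^ (j : ℕ))
      (1 / 2 ^ m) := by
  rw [← natPNatEquiv.hasSum_iff]
  have hcomp : (fun j : ℕ+ => ((bnd m j : ℤ) : ℝ) / 2 ^ (j : ℕ))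
      ∘ natPNatEquiv = fun k : ℕ => (if m ≤ k then (1 : ℝ) else 0) / 2 ^ (k + 1) := by
    funext k
    show ((bnd m ⟨k + 1, k.succ_pos⟩ : ℤ) : ℝ) / 2 ^ (k + 1) = _
    by_cases h : m ≤ k <;> simp [bnd, h] <;> omega
  rw [hcomp]
  have hg : Function.Injective (fun i : ℕ => m + i) := fun a b h => by
    simpa using h
  rw [← Function.Injective.hasSum_iff hg ?_]
  · have hgeo : HasSum (fun i : ℕ => (1 / 2 : ℝ) ^ i * (1 / 2) ^ (m + 1)) (1 / 2 ^ m) := by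
      have := (hasSum_geometric_of_lt_one (by norm_num : (0:ℝ) ≤ 1/2)
        (by norm_num : (1/2:ℝ) < 1)).mul_right ((1 / 2 : ℝ) ^ (m + 1))
      rw [show (1:ℝ) / 2 ^ m = (1 - 1 / 2)⁻¹ * (1 / 2) ^ (m + 1) from ?_]
      · exact this
      rw [div_pow, one_pow, pow_succ]
      field_simp
      ring
    have hco : (fun k : ℕ => (if m ≤ k then (1 : ℝ) else 0) / 2 ^ (k + 1)) ∘ (fun i : ℕ => m + i)
        = fun i : ℕ => (1 / 2 : ℝ) ^ i * (1 / 2) ^ (m + 1) := by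
      funext i
      simp only [Function.comp_apply, if_pos (Nat.le_add_right m i)]
      rw [div_pow, div_pow, one_pow, one_pow, div_mul_div_comm, one_mul, ← pow_add]
      congr 2
      omega
    rw [hco]
    exact hgeo
  · intro k hk
    have hklt : k < m := by
      by_contra hc
      refine hk ⟨k - m, ?_⟩
      show m + (k - m) = k
      omega
    simp [Nat.not_le.mpr hklt]

lemma exists_rep_le (m : ℕ) (x : ℝ) (h0 : 0 ≤ x) (h1 : x ≤ 1 / 2 ^ m) :
    ∃ a : ℕ+ → ℤ, IsBinRep a x ∧ ∀ j : ℕ+, (j : ℕ) ≤ m → a j = 0 := by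
  rcases lt_or_eq_of_le h1 with h1' | h1'
  · exact exists_rep_lt m x h0 h1'
  · refine ⟨bnd m, ⟨?_, ?_⟩, ?_⟩
    · intro j
      unfold bnd
      by_cases h : m + 1 ≤ (j : ℕ) <;> simp [h]
    · rw [h1']
      exact (hasSum_boundary m).tsum_eq.symm
    · intro j hj
      unfold bnd
      rw [if_neg (by omega : ¬ m + 1 ≤ (j : ℕ))]

theorem stmt3 (n : ℕ) (s t : ℝ)
    (h : 0 ≤ s ∧ 0 ≤ t ∧ s + t ≤ 1 / 2 ^ n) :
    ∃ a b : ℕ+ → ℤ, IsBinRep a s ∧ IsBinRep b t ∧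
      (∀ j : ℕ+, (j : ℕ) ≤ n → a j = 0 ∧ b j = 0) ∧
      a ⟨n + 1, n.succ_pos⟩ * b ⟨n + 1, n.succ_pos⟩ = 0 := by
  obtain ⟨hs, ht, hst⟩ := h
  have hhalf : (1 : ℝ) / 2 ^ (n + 1) + 1 / 2 ^ (n + 1) = 1 / 2 ^ n := by
    rw [pow_succ]
    field_simp
    ring
  have hsle : s ≤ 1 / 2 ^ n := by linarith
  have htle : t ≤ 1 / 2 ^ n := by linarith
  by_cases hcase : s ≤ 1 / 2 ^ (n + 1)
  · obtain ⟨a, ha, haz⟩ := exists_rep_le (n + 1) s hs hcase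
    obtain ⟨b, hb, hbz⟩ := exists_rep_le n t ht htle
    refine ⟨a, b, ha, hb, fun j hj => ⟨haz j (by omega), hbz j hj⟩, ?_⟩
    rw [haz ⟨n + 1, n.succ_pos⟩ (by simp), zero_mul]
  · have hcase' : t ≤ 1 / 2 ^ (n + 1) := by
      push_neg at hcase
      linarith
    obtain ⟨a, ha, haz⟩ := exists_rep_le n s hs hsle
    obtain ⟨b, hb, hbz⟩ := exists_rep_le (n + 1) t ht hcase'
    refine ⟨a, b, ha, hb, fun j hj => ⟨haz j hj, hbz j (by omega)⟩, ?_⟩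
    rw [hbz ⟨n + 1, n.succ_pos⟩ (by simp), mul_zero]
end

section
/- If a point (s,t) ∈ [0,1] × [0,1] lies in the Sierpinski triangle S_T, then there exist binary representations a of s and b of t such that a_j · b_j = 0 for every index j ≥ 1. -/
open scoped Pointwise

def digA : Fin 3 → ℤ := ![0, 1, 0]
def digB : Fin 3 → ℤ := ![0, 0, 1]
noncomputable def off (i : Fin 3) : ℝ × ℝ := ((digA i : ℝ) / 2, (digB i : ℝ) / 2)

lemma S_succ_subset : ∀ n, S (n + 1) ⊆ S n := by
  intro n
  induction n with
  | zero =>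
      rintro p ((⟨q, hq, rfl⟩ | ⟨r, ⟨q, hq, rfl⟩, rfl⟩) | ⟨r, ⟨q, hq, rfl⟩, rfl⟩) <;>
      · obtain ⟨h1, h2, h3⟩ := hq
        refine ⟨?_, ?_, ?_⟩ <;>
          simp only [Prod.smul_fst, Prod.smul_snd, Prod.fst_add, Prod.snd_add,
            smul_eq_mul] <;> nlinarith
  | succ n ih =>
      have h1 : (1 / 2 : ℝ) • S (n + 1) ⊆ (1 / 2 : ℝ) • S n := Set.smul_set_mono ih
      rintro p ((hp | ⟨r, hr, rfl⟩) | ⟨r, hr, rfl⟩)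
      · exact Set.mem_union_left _ (Set.mem_union_left _ (h1 hp))
      · exact Set.mem_union_left _ (Set.mem_union_right _ ⟨r, h1 hr, rfl⟩)
      · exact Set.mem_union_right _ ⟨r, h1 hr, rfl⟩

lemma S_antitone : Antitone S := antitone_nat_of_succ_le S_succ_subset

lemma mem_S_succ {p : ℝ × ℝ} {n : ℕ} (hp : p ∈ S (n + 1)) :
    ∃ i : Fin 3, (2 : ℝ) • (p - off i) ∈ S n := by
  rcases hp with (⟨q, hq, rfl⟩ | ⟨r, ⟨q, hq, rfl⟩, rfl⟩) | ⟨r, ⟨q, hq, rfl⟩, rfl⟩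
  · refine ⟨0, ?_⟩
    have : (2 : ℝ) • ((1 / 2 : ℝ) • q - off 0) = q := by
      ext <;> simp [off, digA, digB, Prod.smul_fst, Prod.smul_snd, smul_eq_mul]
    rwa [this]
  · refine ⟨1, ?_⟩
    have : (2 : ℝ) • ((1 / 2 : ℝ) • q + ((1 / 2 : ℝ), (0 : ℝ)) - off 1) = q := by
      ext <;> simp [off, digA, digB, Prod.smul_fst, Prod.smul_snd, smul_eq_mul]
    rwa [this]
  · refine ⟨2, ?_⟩
    have : (2 : ℝ) • ((1 / 2 : ℝ) • q + ((0 : ℝ), (1 / 2 : ℝ)) - off 2) = q := by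
      ext <;> simp [off, digA, digB, Prod.smul_fst, Prod.smul_snd, smul_eq_mul]
    rwa [this]

lemma step_lemma {p : ℝ × ℝ} (hp : p ∈ sierpinskiT) :
    ∃ i : Fin 3, (2 : ℝ) • (p - off i) ∈ sierpinskiT := by
  have hS : ∀ n, p ∈ S n := by simpa [sierpinskiT, Set.mem_iInter] using hp
  choose f hf using fun n => mem_S_succ (hS (n + 1))
  obtain ⟨i, hi⟩ := Finite.exists_infinite_fiber f
  refine ⟨i, ?_⟩
  rw [sierpinskiT, Set.mem_iInter]
  intro n
  rw [Set.infinite_coe_iff] at hi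
  obtain ⟨m, hm, hmn⟩ := hi.exists_gt n
  have hfm : f m = i := hm
  exact S_antitone hmn.le (hfm ▸ hf m)

theorem stmt4 (s t : ℝ) (hs : s ∈ Set.Icc (0 : ℝ) 1) (ht : t ∈ Set.Icc (0 : ℝ) 1)
    (h : (s, t) ∈ sierpinskiT) :
    ∃ a b : ℕ+ → ℤ, IsBinRep a s ∧ IsBinRep b t ∧ ∀ j : ℕ+, a j * b j = 0 := by
  classical
  -- iterate the step
  let G : {p : ℝ × ℝ // p ∈ sierpinskiT} → Fin 3 × {p : ℝ × ℝ // p ∈ sierpinskiT} :=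
    fun x => ⟨(step_lemma x.2).choose, ⟨(2 : ℝ) • ((x : ℝ × ℝ) - off (step_lemma x.2).choose),
      (step_lemma x.2).choose_spec⟩⟩
  let q : ℕ → {p : ℝ × ℝ // p ∈ sierpinskiT} :=
    fun n => (fun x => (G x).2)^[n] ⟨(s, t), h⟩
  let d : ℕ → Fin 3 := fun n => (G (q n)).1
  have hq0 : (q 0 : ℝ × ℝ) = (s, t) := rfl
  have hqsucc : ∀ n, (q (n + 1) : ℝ × ℝ) = (2 : ℝ) • ((q n : ℝ × ℝ) - off (d n)) := by
    intro n
    have : q (n + 1) = (G (q n)).2 := Function.iterate_succ_apply' _ _ _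
    rw [this]
  -- componentwise recurrences
  set x : ℕ → ℝ := fun n => (q n : ℝ × ℝ).1 with hx
  set y : ℕ → ℝ := fun n => (q n : ℝ × ℝ).2 with hy
  have hxrec : ∀ n, x n = (digA (d n) : ℝ) / 2 + x (n + 1) / 2 := by
    intro n
    have := hqsucc n
    have h1 : x (n + 1) = 2 * (x n - (digA (d n) : ℝ) / 2) := by
      simp only [hx]
      rw [this]
      simp [off, Prod.smul_fst, smul_eq_mul]
    rw [h1]; ring
  have hyrec : ∀ n, y n = (digB (d n) : ℝ) / 2 + y (n + 1) / 2 := by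
    intro n
    have := hqsucc n
    have h1 : y (n + 1) = 2 * (y n - (digB (d n) : ℝ) / 2) := by
      simp only [hy]
      rw [this]
      simp [off, Prod.smul_snd, smul_eq_mul]
    rw [h1]; ring
  -- bounds
  have hT0 : ∀ n, 0 ≤ x n ∧ 0 ≤ y n ∧ x n + y n ≤ 1 := by
    intro n
    have h0 : (q n : ℝ × ℝ) ∈ ⋂ m, S m := (q n).2
    exact Set.mem_iInter.mp h0 0
  -- partial sums
  have hpartialx : ∀ N, s = (∑ n ∈ Finset.range N, (digA (d n) : ℝ) / 2 ^ (n + 1)) + x N / 2 ^ N := by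
    intro N
    induction N with
    | zero => simp [hx, hq0]
    | succ N ih =>
        rw [Finset.sum_range_succ, ih, hxrec N]
        field_simp
        ring
  have hpartialy : ∀ N, t = (∑ n ∈ Finset.range N, (digB (d n) : ℝ) / 2 ^ (n + 1)) + y N / 2 ^ N := by
    intro N
    induction N with
    | zero => simp [hy, hq0]
    | succ N ih =>
        rw [Finset.sum_range_succ, ih, hyrec N]
        field_simp
        ring
  -- digits are 0 or 1
  have hdA : ∀ i : Fin 3, digA i = 0 ∨ digA i = 1 := by decide
  have hdB : ∀ i : Fin 3, digB i = 0 ∨ digB i = 1 := by decide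
  have hdAB : ∀ i : Fin 3, digA i * digB i = 0 := by decide
  -- tail goes to 0
  have htail : ∀ (z : ℕ → ℝ), (∀ n, 0 ≤ z n ∧ z n ≤ 1) →
      Filter.Tendsto (fun N => z N / 2 ^ N) Filter.atTop (nhds 0) := by
    intro z hz
    have h2 : Filter.Tendsto (fun n : ℕ => (1:ℝ) / 2 ^ n) Filter.atTop (nhds 0) := by
      simpa [one_div, inv_pow] using tendsto_pow_atTop_nhds_zero_of_lt_one
        (by norm_num : (0:ℝ) ≤ 1/2) (by norm_num : (1/2:ℝ) < 1)
    exact squeeze_zero (fun n => div_nonneg (hz n).1 (by positivity))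
      (fun n => div_le_div₀ (by norm_num) (hz n).2 (by positivity) le_rfl) h2
  -- HasSum for a generic digit sequence
  have hsum : ∀ (c : ℕ → ℤ) (z : ℕ → ℝ) (v : ℝ), (∀ n, c n = 0 ∨ c n = 1) →
      (∀ n, 0 ≤ z n ∧ z n ≤ 1) →
      (∀ N, v = (∑ n ∈ Finset.range N, (c n : ℝ) / 2 ^ (n + 1)) + z N / 2 ^ N) →
      HasSum (fun n : ℕ => (c n : ℝ) / 2 ^ (n + 1)) v := by
    intro c z v hc hz hpart
    have hsummable : Summable (fun n : ℕ => (c n : ℝ) / 2 ^ (n + 1)) := by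
      have hgeom : Summable (fun n : ℕ => (1:ℝ) / 2 ^ (n + 1)) := by
        refine (summable_geometric_two.mul_left (1/2)).congr fun n => ?_
        rw [pow_succ]; simp only [one_div, inv_pow, mul_inv]; ring
      refine Summable.of_nonneg_of_le (fun n => ?_) (fun n => ?_) hgeom
      · have h1 : (0:ℝ) ≤ (c n : ℝ) := by rcases hc n with h | h <;> simp [h]
        positivity
      · have h1 : (c n : ℝ) ≤ 1 := by rcases hc n with h | h <;> simp [h]
        exact div_le_div₀ (by norm_num) h1 (by positivity) le_rfl
    rw [hsummable.hasSum_iff_tendsto_nat]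
    have : (fun N => ∑ n ∈ Finset.range N, (c n : ℝ) / 2 ^ (n + 1)) =
        fun N => v - z N / 2 ^ N := by
      funext N
      rw [hpart N]; ring
    rw [this]
    have := (htail z hz).const_sub v
    simpa using this
  -- assemble
  refine ⟨fun j => digA (d j.natPred), fun j => digB (d j.natPred), ⟨fun j => hdA _, ?_⟩,
    ⟨fun j => hdB _, ?_⟩, fun j => hdAB _⟩
  · have hA := hsum (fun n => digA (d n)) x s (fun n => hdA _)
      (fun n => ⟨(hT0 n).1, by have := hT0 n; linarith [this.2.1, this.2.2]⟩) hpartialx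
    rw [← hA.tsum_eq]
    rw [← Equiv.tsum_eq Equiv.pnatEquivNat.symm (fun j : ℕ+ => ((digA (d j.natPred) : ℝ)) / 2 ^ (j : ℕ))]
    apply tsum_congr
    intro n
    simp [Equiv.pnatEquivNat, Nat.succPNat]
  · have hB := hsum (fun n => digB (d n)) y t (fun n => hdB _)
      (fun n => ⟨(hT0 n).2.1, by have := hT0 n; linarith [this.1, this.2.2]⟩) hpartialy
    rw [← hB.tsum_eq]
    rw [← Equiv.tsum_eq Equiv.pnatEquivNat.symm (fun j : ℕ+ => ((digB (d j.natPred) : ℝ)) / 2 ^ (j : ℕ))]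
    apply tsum_congr
    intro n
    simp [Equiv.pnatEquivNat, Nat.succPNat]
end

section
/- Let (s,t) ∈ [0,1] × [0,1]. If s and t admit finite binary representations a and b such that a_j · b_j = 0 for every index j ≥ 1, then the point (s,t) lies in the Sierpinski triangle S_T. -/
open scoped Pointwise

namespace Stmt5Aux

noncomputable def e : ℕ ≃ ℕ+ := Equiv.pnatEquivNat.symm

lemma tsum_pnat_eq (f : ℕ+ → ℝ) : ∑' j : ℕ+, f j = ∑' n : ℕ, f n.succPNat := by
  rw [← e.tsum_eq f]; rfl

lemma summable_pnat_iff (f : ℕ+ → ℝ) :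
    Summable f ↔ Summable (fun n : ℕ => f n.succPNat) := by
  constructor
  · intro h; exact (e.summable_iff).2 h
  · intro h; exact (e.summable_iff).1 h

lemma summable_geo : Summable (fun j : ℕ+ => (1 / 2 : ℝ) ^ (j : ℕ)) := by
  have : Summable (fun n : ℕ => (1 / 2 : ℝ) ^ n) := summable_geometric_two
  exact this.comp_injective (fun x y h => by exact_mod_cast PNat.coe_injective h)

lemma tsum_geo : ∑' j : ℕ+, (1 / 2 : ℝ) ^ (j : ℕ) = 1 := by
  rw [tsum_pnat_eq]
  have : ∀ n : ℕ, (1 / 2 : ℝ) ^ ((n.succPNat : ℕ)) = 1 / 2 / 2 ^ n := by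
    intro n
    rw [show ((n.succPNat : ℕ)) = n + 1 from rfl, pow_succ]
    rw [div_pow, one_pow]
    ring
  simp_rw [this]
  exact tsum_geometric_two' 1

lemma summable_of_digits {c : ℕ+ → ℝ} (h0 : ∀ j, 0 ≤ c j) (h1 : ∀ j, c j ≤ 1) :
    Summable (fun j : ℕ+ => c j / 2 ^ (j : ℕ)) := by
  refine Summable.of_nonneg_of_le (fun j => div_nonneg (h0 j) (by positivity))
    (fun j => ?_) summable_geo
  rw [div_le_iff₀ (by positivity)]
  calc c j ≤ 1 := h1 j
    _ = (1 / 2 : ℝ) ^ (j : ℕ) * 2 ^ (j : ℕ) := by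
        rw [div_pow, one_pow, div_mul_cancel₀]; positivity

lemma digits_nonneg {a : ℕ+ → ℤ} (ha : ∀ j : ℕ+, a j = 0 ∨ a j = 1) (j : ℕ+) :
    (0 : ℝ) ≤ (a j : ℝ) := by rcases ha j with h | h <;> simp [h]

lemma digits_le_one {a : ℕ+ → ℤ} (ha : ∀ j : ℕ+, a j = 0 ∨ a j = 1) (j : ℕ+) :
    ((a j : ℝ)) ≤ 1 := by rcases ha j with h | h <;> simp [h]

lemma summable_rep {a : ℕ+ → ℤ} (ha : ∀ j : ℕ+, a j = 0 ∨ a j = 1) :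
    Summable (fun j : ℕ+ => (a j : ℝ) / 2 ^ (j : ℕ)) :=
  summable_of_digits (digits_nonneg ha) (digits_le_one ha)

lemma rep_nonneg {a : ℕ+ → ℤ} {s : ℝ} (ha : IsBinRep a s) : 0 ≤ s := by
  rw [ha.2]
  exact tsum_nonneg (fun j => div_nonneg (digits_nonneg ha.1 j) (by positivity))

/-- Shift lemma: the tail digits represent `2s - a 1`. -/
lemma shift {a : ℕ+ → ℤ} {s : ℝ} (ha : IsBinRep a s) :
    IsBinRep (fun j => a (j + 1)) (2 * s - a 1) := by
  obtain ⟨hd, hsum⟩ := ha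
  refine ⟨fun j => hd (j + 1), ?_⟩
  have hsumm : Summable (fun j : ℕ+ => (a j : ℝ) / 2 ^ (j : ℕ)) := summable_rep hd
  have hsn : Summable (fun n : ℕ => (a n.succPNat : ℝ) / 2 ^ ((n.succPNat : ℕ))) :=
    (summable_pnat_iff _).1 hsumm
  have key : s = (a 1 : ℝ) / 2 + (1 / 2) * ∑' j : ℕ+, (a (j + 1) : ℝ) / 2 ^ (j : ℕ) := by
    rw [hsum, tsum_pnat_eq, Summable.tsum_eq_zero_add hsn]
    congr 1
    · norm_num [show (Nat.succPNat 0 : ℕ+) = 1 from rfl]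
    · rw [tsum_pnat_eq (fun j => (a (j + 1) : ℝ) / 2 ^ (j : ℕ)), ← tsum_mul_left]
      congr 1
      funext n
      show (a (n.succPNat + 1) : ℝ) / 2 ^ (n + 2)
          = 1 / 2 * ((a (n.succPNat + 1) : ℝ) / 2 ^ (n + 1))
      rw [pow_succ]
      ring
  rw [key]
  ring

lemma sum_le_one {a b : ℕ+ → ℤ} {s t : ℝ} (ha : IsBinRep a s) (hb : IsBinRep b t)
    (hab : ∀ j : ℕ+, a j * b j = 0) : s + t ≤ 1 := by
  have hd : ∀ j : ℕ+, a j + b j = 0 ∨ a j + b j = 1 := by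
    intro j
    have h := hab j
    rcases ha.1 j with h1 | h1 <;> rcases hb.1 j with h2 | h2 <;>
      simp [h1, h2] at h ⊢
  have hsa := summable_rep ha.1
  have hsb := summable_rep hb.1
  have hst : s + t = ∑' j : ℕ+, ((a j + b j : ℤ) : ℝ) / 2 ^ (j : ℕ) := by
    rw [ha.2, hb.2, ← Summable.tsum_add hsa hsb]
    congr 1; funext j; push_cast; ring
  rw [hst, ← tsum_geo]
  refine Summable.tsum_le_tsum (fun j => ?_) (summable_rep hd) summable_geo
  rw [div_le_iff₀ (by positivity), div_pow, one_pow, div_mul_cancel₀ _ (by positivity)]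
  exact_mod_cast digits_le_one hd j

lemma mem_S (n : ℕ) : ∀ (s t : ℝ) (a b : ℕ+ → ℤ), IsBinRep a s → IsBinRep b t →
    (∀ j : ℕ+, a j * b j = 0) → (s, t) ∈ S n := by
  induction n with
  | zero =>
    intro s t a b ha hb hab
    exact ⟨rep_nonneg ha, rep_nonneg hb, sum_le_one ha hb hab⟩
  | succ n ih =>
    intro s t a b ha hb hab
    have ha' := shift ha
    have hb' := shift hb
    have hab' : ∀ j : ℕ+, a (j + 1) * b (j + 1) = 0 := fun j => hab (j + 1)
    have hmem := ih _ _ _ _ ha' hb' hab'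
    show (s, t) ∈ _ ∪ _ ∪ _
    rcases ha.1 1 with ha1 | ha1
    · rcases hb.1 1 with hb1 | hb1
      · left; left
        refine ⟨(2 * s - a 1, 2 * t - b 1), hmem, ?_⟩
        have e1 : ((a 1 : ℤ) : ℝ) = 0 := by rw [ha1]; norm_num
        have e2 : ((b 1 : ℤ) : ℝ) = 0 := by rw [hb1]; norm_num
        simp only [Prod.smul_mk, smul_eq_mul, Prod.mk.injEq, e1, e2]
        constructor <;> ring
      · right
        refine ⟨((1/2 : ℝ)) • (2 * s - a 1, 2 * t - b 1), ⟨_, hmem, rfl⟩, ?_⟩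
        have e1 : ((a 1 : ℤ) : ℝ) = 0 := by rw [ha1]; norm_num
        have e2 : ((b 1 : ℤ) : ℝ) = 1 := by rw [hb1]; norm_num
        simp only [Prod.smul_mk, smul_eq_mul, Prod.mk_add_mk, Prod.mk.injEq, e1, e2]
        constructor <;> ring
    · left; right
      have hb1 : b 1 = 0 := by
        have h := hab 1; rw [ha1] at h; simpa using h
      refine ⟨((1/2 : ℝ)) • (2 * s - a 1, 2 * t - b 1), ⟨_, hmem, rfl⟩, ?_⟩
      have e1 : ((a 1 : ℤ) : ℝ) = 1 := by rw [ha1]; norm_num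
      have e2 : ((b 1 : ℤ) : ℝ) = 0 := by rw [hb1]; norm_num
      simp only [Prod.smul_mk, smul_eq_mul, Prod.mk_add_mk, Prod.mk.injEq, e1, e2]
      constructor <;> ring

end Stmt5Aux


theorem stmt5 (s t : ℝ) (hs : s ∈ Set.Icc (0 : ℝ) 1) (ht : t ∈ Set.Icc (0 : ℝ) 1)
    (a b : ℕ+ → ℤ) (ha : IsBinRep a s) (hb : IsBinRep b t)
    (hafin : (Function.support a).Finite) (hbfin : (Function.support b).Finite)
    (hab : ∀ j : ℕ+, a j * b j = 0) :
    (s, t) ∈ sierpinskiT := by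
  exact Set.mem_iInter.2 (fun n => Stmt5Aux.mem_S n s t a b ha hb hab)
end

section
/- Let x, y ∈ ℓ¹(ℤ₂). If Σh(x + y) = Σh(x) + Σh(y), then the point (X, Y) ∈ ℝ², where X = ∑_{j=1}^∞ x̄_j 2^{-j} and Y = ∑_{j=1}^∞ ȳ_j 2^{-j}, lies in the Sierpinski triangle S_T. -/
open scoped Pointwise

/-- `Σh` for Egyptian fractions: the sum of the unit fractions `x̄_j/(j+1)`,
where `x : ℕ+ →₀ ZMod 2` is a finitely supported sequence indexed by `{1,2,...}`
and `x̄_j ∈ {0,1}` is the integer representative of `x j`. -/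
noncomputable def sigmah2 (x : ℕ+ →₀ ZMod 2) : ℚ :=
  ∑ j ∈ x.support, ((x j).val : ℚ) / ((j : ℕ) + 1)

lemma zmod2_cases (a : ZMod 2) : a = 0 ∨ a = 1 := by revert a; decide

lemma digit_nonneg {c : ℕ → ℝ} (hc : ∀ k, c k = 0 ∨ c k = 1) (k : ℕ) : 0 ≤ c k := by
  rcases hc k with h | h <;> rw [h] <;> norm_num

lemma digit_le_one {c : ℕ → ℝ} (hc : ∀ k, c k = 0 ∨ c k = 1) (k : ℕ) : c k ≤ 1 := by
  rcases hc k with h | h <;> rw [h] <;> norm_num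

lemma summable_digits {c : ℕ → ℝ} (hc : ∀ k, c k = 0 ∨ c k = 1) :
    Summable fun k => c k / 2 ^ (k + 1) := by
  refine Summable.of_nonneg_of_le (fun k => ?_) (fun k => ?_) (summable_geometric_two' 1)
  · have := digit_nonneg hc k; positivity
  · have h1 : c k ≤ 1 := digit_le_one hc k
    rw [show (1:ℝ)/2/2^k = 1/2^(k+1) by rw [pow_succ']; ring]
    gcongr

lemma tsum_one_half : ∑' k : ℕ, (1:ℝ) / 2 ^ (k + 1) = 1 := by
  have : ∀ k : ℕ, (1:ℝ) / 2 ^ (k+1) = 1/2/2^k := by intro k; rw [pow_succ']; ring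
  rw [tsum_congr this]; exact tsum_geometric_two' 1

lemma tsum_shift {c : ℕ → ℝ} (hc : ∀ k, c k = 0 ∨ c k = 1) :
    ∑' k, c k / 2 ^ (k + 1) = c 0 / 2 + (1/2) * ∑' k, c (k+1) / 2 ^ (k + 1) := by
  rw [Summable.tsum_eq_zero_add (summable_digits hc)]
  congr 1
  · norm_num
  · rw [← tsum_mul_left]
    exact tsum_congr fun k => by rw [pow_succ]; ring

lemma mem_S (n : ℕ) (c d : ℕ → ℝ) (hc : ∀ k, c k = 0 ∨ c k = 1)
    (hd : ∀ k, d k = 0 ∨ d k = 1) (hcd : ∀ k, c k = 0 ∨ d k = 0) :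
    ((∑' k, c k / 2 ^ (k + 1)), (∑' k, d k / 2 ^ (k + 1))) ∈ S n := by
  induction n generalizing c d with
  | zero =>
    refine ⟨?_, ?_, ?_⟩
    · exact tsum_nonneg fun k => by have := digit_nonneg hc k; positivity
    · exact tsum_nonneg fun k => by have := digit_nonneg hd k; positivity
    · have hsum : ∑' k, c k / 2 ^ (k+1) + ∑' k, d k / 2 ^ (k+1)
          = ∑' k, (c k + d k) / 2 ^ (k+1) := by
        rw [← Summable.tsum_add (summable_digits hc) (summable_digits hd)]
        exact tsum_congr fun k => (add_div _ _ _).symm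
      rw [hsum, ← tsum_one_half]
      apply Summable.tsum_le_tsum _ _ (summable_geometric_two' 1 |>.congr
        (fun k => by rw [pow_succ']; ring))
      · intro k
        have hb : c k + d k ≤ 1 := by
          rcases hcd k with h | h
          · rw [h]; simpa using digit_le_one hd k
          · rw [h]; simpa using digit_le_one hc k
        gcongr
      · exact ((summable_digits hc).add (summable_digits hd)).congr
          fun k => (add_div _ _ _).symm
  | succ n ih =>
    set c' := fun k => c (k+1) with hc'
    set d' := fun k => d (k+1) with hd'
    have hmem := ih c' d' (fun k => hc (k+1)) (fun k => hd (k+1)) (fun k => hcd (k+1))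
    set X' := ∑' k, c' k / 2 ^ (k+1)
    set Y' := ∑' k, d' k / 2 ^ (k+1)
    have hX : ∑' k, c k / 2 ^ (k+1) = c 0 / 2 + (1/2) * X' := tsum_shift hc
    have hY : ∑' k, d k / 2 ^ (k+1) = d 0 / 2 + (1/2) * Y' := tsum_shift hd
    rcases hc 0 with h0c | h0c
    · rcases hd 0 with h0d | h0d
      · left; left
        refine ⟨(X', Y'), hmem, ?_⟩
        simp only [Prod.smul_mk, smul_eq_mul, Prod.mk.injEq]
        rw [hX, hY, h0c, h0d]; constructor <;> ring
      · right
        refine ⟨(1/2 : ℝ) • (X', Y'), ⟨(X', Y'), hmem, rfl⟩, ?_⟩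
        simp only [Prod.smul_mk, smul_eq_mul, Prod.mk_add_mk, Prod.mk.injEq]
        rw [hX, hY, h0c, h0d]; constructor <;> ring
    · have h0d : d 0 = 0 := (hcd 0).resolve_left (by rw [h0c]; norm_num)
      left; right
      refine ⟨(1/2 : ℝ) • (X', Y'), ⟨(X', Y'), hmem, rfl⟩, ?_⟩
      simp only [Prod.smul_mk, smul_eq_mul, Prod.mk_add_mk, Prod.mk.injEq]
      rw [hX, hY, h0c, h0d]; constructor <;> ring

lemma sigmah2_eq_sum (z : ℕ+ →₀ ZMod 2) (s : Finset ℕ+) (hs : z.support ⊆ s) :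
    sigmah2 z = ∑ j ∈ s, ((z j).val : ℚ) / ((j : ℕ) + 1) := by
  apply Finset.sum_subset hs
  intro j _ hj
  rw [Finsupp.notMem_support_iff.mp hj]
  simp

lemma disj_of_sigmah2 (x y : ℕ+ →₀ ZMod 2)
    (h : sigmah2 (x + y) = sigmah2 x + sigmah2 y) : ∀ j, x j = 0 ∨ y j = 0 := by
  by_contra hc
  push_neg at hc
  obtain ⟨j0, hx0, hy0⟩ := hc
  have hx1 : x j0 = 1 := (zmod2_cases _).resolve_left hx0
  have hy1 : y j0 = 1 := (zmod2_cases _).resolve_left hy0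
  set s := x.support ∪ y.support with hs
  have hxy : (x + y).support ⊆ s := Finsupp.support_add
  have hj0 : j0 ∈ s := Finset.mem_union_left _ (Finsupp.mem_support_iff.mpr hx0)
  have key : sigmah2 (x + y) < sigmah2 x + sigmah2 y := by
    rw [sigmah2_eq_sum (x + y) s hxy, sigmah2_eq_sum x s Finset.subset_union_left,
      sigmah2_eq_sum y s Finset.subset_union_right, ← Finset.sum_add_distrib]
    apply Finset.sum_lt_sum
    · intro j _
      have hpos : (0:ℚ) < (j : ℕ) + 1 := by positivity
      rw [← add_div]
      gcongr
      have : ((x + y) j).val ≤ (x j).val + (y j).val := by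
        rw [Finsupp.add_apply]
        rcases zmod2_cases (x j) with h1 | h1 <;> rcases zmod2_cases (y j) with h2 | h2 <;>
          rw [h1, h2] <;> decide
      exact_mod_cast this
    · refine ⟨j0, hj0, ?_⟩
      have hpos : (0:ℚ) < (j0 : ℕ) + 1 := by positivity
      rw [← add_div, Finsupp.add_apply, hx1, hy1]
      apply div_lt_div_of_pos_right _ hpos
      have e1 : ((1 : ZMod 2) + 1).val = 0 := rfl
      have e2 : (1 : ZMod 2).val = 1 := rfl
      rw [e1, e2]
      norm_num
  exact absurd h (ne_of_lt key)

theorem stmt6 (x y : ℕ+ →₀ ZMod 2)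
    (h : sigmah2 (x + y) = sigmah2 x + sigmah2 y) :
    ((∑' j : ℕ+, ((x j).val : ℝ) / 2 ^ (j : ℕ)),
     (∑' j : ℕ+, ((y j).val : ℝ) / 2 ^ (j : ℕ))) ∈ sierpinskiT := by
  have hdisj := disj_of_sigmah2 x y h
  set c : ℕ → ℝ := fun n => ((x n.succPNat).val : ℝ) with hcdef
  set d : ℕ → ℝ := fun n => ((y n.succPNat).val : ℝ) with hddef
  have e2 : (1 : ZMod 2).val = 1 := rfl
  have hc : ∀ k, c k = 0 ∨ c k = 1 := by
    intro k
    rcases zmod2_cases (x k.succPNat) with h1 | h1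
    · left; show ((x k.succPNat).val : ℝ) = 0; rw [h1]; norm_num
    · right; show ((x k.succPNat).val : ℝ) = 1; rw [h1, e2]; norm_num
  have hd : ∀ k, d k = 0 ∨ d k = 1 := by
    intro k
    rcases zmod2_cases (y k.succPNat) with h1 | h1
    · left; show ((y k.succPNat).val : ℝ) = 0; rw [h1]; norm_num
    · right; show ((y k.succPNat).val : ℝ) = 1; rw [h1, e2]; norm_num
  have hcd : ∀ k, c k = 0 ∨ d k = 0 := by
    intro k
    rcases hdisj k.succPNat with h1 | h1
    · left; show ((x k.succPNat).val : ℝ) = 0; rw [h1]; norm_num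
    · right; show ((y k.succPNat).val : ℝ) = 0; rw [h1]; norm_num
  have hx : ∑' j : ℕ+, ((x j).val : ℝ) / 2 ^ (j : ℕ) = ∑' k : ℕ, c k / 2 ^ (k + 1) :=
    (Equiv.pnatEquivNat.symm.tsum_eq _).symm
  have hy : ∑' j : ℕ+, ((y j).val : ℝ) / 2 ^ (j : ℕ) = ∑' k : ℕ, d k / 2 ^ (k + 1) :=
    (Equiv.pnatEquivNat.symm.tsum_eq _).symm
  rw [hx, hy]
  exact Set.mem_iInter.mpr fun n => mem_S n c d hc hd hcd
end

section
/- For every n ≥ 0, every point (s,t) of S n admits binary representations a of s and b of t such that a_j · b_j = 0 for all indices j ≤ n + 1. -/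
open scoped Pointwise

/- ## auxiliary ℕ-indexed machinery -/

def IsBinRepNat (A : ℕ → ℤ) (t : ℝ) : Prop :=
  (∀ n, A n = 0 ∨ A n = 1) ∧ HasSum (fun n : ℕ => (A n : ℝ) / 2 ^ (n + 1)) t

def toRep (A : ℕ → ℤ) : ℕ+ → ℤ := fun j => A j.natPred

lemma isBinRep_toRep {A : ℕ → ℤ} {t : ℝ} (h : IsBinRepNat A t) :
    IsBinRep (toRep A) t := by
  constructor
  · intro j; exact h.1 j.natPred
  · have he := Equiv.pnatEquivNat.symm.tsum_eq
      (fun j : ℕ+ => (toRep A j : ℝ) / 2 ^ (j : ℕ))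
    have : (fun n : ℕ => (toRep A (Equiv.pnatEquivNat.symm n) : ℝ) /
        2 ^ ((Equiv.pnatEquivNat.symm n : ℕ+) : ℕ)) =
        fun n : ℕ => (A n : ℝ) / 2 ^ (n + 1) := by
      funext n
      simp [toRep, Equiv.pnatEquivNat, Nat.succPNat]
    rw [this] at he
    rw [← he, h.2.tsum_eq]

def shiftA (ε : ℤ) (A : ℕ → ℤ) : ℕ → ℤ := fun n => if n = 0 then ε else A (n - 1)

lemma isBinRepNat_shift {A : ℕ → ℤ} {t : ℝ} (h : IsBinRepNat A t) {ε : ℤ}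
    (hε : ε = 0 ∨ ε = 1) : IsBinRepNat (shiftA ε A) (((ε : ℝ) + t) / 2) := by
  constructor
  · intro n; cases n with
    | zero => simpa [shiftA] using hε
    | succ m => simpa [shiftA] using h.1 m
  · have h2 : HasSum (fun n : ℕ => (shiftA ε A (n + 1) : ℝ) / 2 ^ (n + 1 + 1)) (t / 2) := by
      have := h.2.div_const 2
      convert this using 2 with n
      · rfl
      simp [shiftA]
      ring
    have := (hasSum_nat_add_iff (f := fun n : ℕ => (shiftA ε A n : ℝ) / 2 ^ (n + 1)) 1).mp h2
    convert this using 1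
    · rfl
    simp [shiftA]
    ring

lemma exists_binRepNat {t : ℝ} (h0 : 0 ≤ t) (h1 : t ≤ 1) : ∃ A, IsBinRepNat A t := by
  rcases eq_or_lt_of_le h1 with h1 | h1
  · refine ⟨fun _ => 1, fun n => Or.inr rfl, ?_⟩
    rw [h1]
    have := hasSum_geometric_two' 1
    convert this using 2 with n
    push_cast
    ring
  · refine ⟨fun n => ⌊t * 2 ^ (n + 1)⌋ - 2 * ⌊t * 2 ^ n⌋, ?_, ?_⟩
    · intro n
      show ⌊t * 2 ^ (n + 1)⌋ - 2 * ⌊t * 2 ^ n⌋ = 0 ∨ ⌊t * 2 ^ (n + 1)⌋ - 2 * ⌊t * 2 ^ n⌋ = 1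
      have hle : 2 * ⌊t * 2 ^ n⌋ ≤ ⌊t * 2 ^ (n + 1)⌋ := by
        rw [Int.le_floor]
        push_cast
        have := Int.floor_le (t * 2 ^ n)
        rw [pow_succ]
        nlinarith
      have hlt : ⌊t * 2 ^ (n + 1)⌋ < 2 * ⌊t * 2 ^ n⌋ + 2 := by
        rw [Int.floor_lt]
        push_cast
        have := Int.lt_floor_add_one (t * 2 ^ n)
        rw [pow_succ]
        nlinarith
      omega
    · have hpart : ∀ N : ℕ, ∑ n ∈ Finset.range N,
          ((⌊t * 2 ^ (n + 1)⌋ - 2 * ⌊t * 2 ^ n⌋ : ℤ) : ℝ) / 2 ^ (n + 1)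
          = (⌊t * 2 ^ N⌋ : ℝ) / 2 ^ N := by
        intro N
        induction N with
        | zero => simp [Int.floor_eq_zero_iff.mpr ⟨h0, by simpa using h1⟩]
        | succ N ih =>
          rw [Finset.sum_range_succ, ih]
          push_cast
          field_simp
          ring
      have hnn : ∀ n : ℕ, 0 ≤ ((⌊t * 2 ^ (n + 1)⌋ - 2 * ⌊t * 2 ^ n⌋ : ℤ) : ℝ) / 2 ^ (n + 1) := by
        intro n
        apply div_nonneg _ (by positivity)
        have hle : 2 * ⌊t * 2 ^ n⌋ ≤ ⌊t * 2 ^ (n + 1)⌋ := by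
          rw [Int.le_floor]
          push_cast
          have := Int.floor_le (t * 2 ^ n)
          rw [pow_succ]
          nlinarith
        exact_mod_cast sub_nonneg.mpr hle
      rw [hasSum_iff_tendsto_nat_of_nonneg hnn]
      simp only [hpart]
      have hlo : Filter.Tendsto (fun N : ℕ => t - (1 / 2 : ℝ) ^ N) Filter.atTop (nhds t) := by
        have := tendsto_pow_atTop_nhds_zero_of_lt_one (r := (1/2 : ℝ)) (by norm_num) (by norm_num)
        simpa using (tendsto_const_nhds (x := t)).sub this
      apply tendsto_of_tendsto_of_tendsto_of_le_of_le hlo tendsto_const_nhds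
      · intro N
        have := Int.lt_floor_add_one (t * 2 ^ N)
        rw [sub_le_iff_le_add, div_add' _ _ _ (by positivity : (2:ℝ)^N ≠ 0)]
        rw [le_div_iff₀ (by positivity : (0:ℝ) < 2 ^ N)]
        have h2N : ((1:ℝ)/2) ^ N * 2 ^ N = 1 := by
          rw [← mul_pow]; norm_num
        nlinarith [Int.lt_floor_add_one (t * 2 ^ N)]
      · intro N
        rw [div_le_iff₀ (by positivity : (0:ℝ) < 2 ^ N)]
        exact Int.floor_le (t * 2 ^ N)

lemma aux (n : ℕ) : ∀ s t : ℝ, (s, t) ∈ S n →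
    ∃ A B : ℕ → ℤ, IsBinRepNat A s ∧ IsBinRepNat B t ∧
      ∀ m : ℕ, m ≤ n → A m * B m = 0 := by
  induction n with
  | zero =>
    intro s t h
    obtain ⟨hs, ht, hst⟩ : 0 ≤ s ∧ 0 ≤ t ∧ s + t ≤ 1 := h
    rcases le_or_gt s (1/2) with hs2 | hs2
    · obtain ⟨A', hA'⟩ := exists_binRepNat (t := 2 * s) (by linarith) (by linarith)
      obtain ⟨B, hB⟩ := exists_binRepNat (t := t) ht (by linarith)
      have hA := isBinRepNat_shift hA' (ε := 0) (Or.inl rfl)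
      refine ⟨shiftA 0 A', B, ?_, hB, ?_⟩
      · convert hA using 1; push_cast; ring
      · intro m hm
        interval_cases m
        simp [shiftA]
    · obtain ⟨B', hB'⟩ := exists_binRepNat (t := 2 * t) (by linarith) (by linarith)
      obtain ⟨A, hA⟩ := exists_binRepNat (t := s) hs (by linarith)
      have hB := isBinRepNat_shift hB' (ε := 0) (Or.inl rfl)
      refine ⟨A, shiftA 0 B', hA, ?_, ?_⟩
      · convert hB using 1; push_cast; ring
      · intro m hm
        interval_cases m
        simp [shiftA]
  | succ n ih =>
    intro s t h
    have step : ∀ (ε₁ ε₂ : ℤ) (s' t' : ℝ), (ε₁ = 0 ∨ ε₁ = 1) → (ε₂ = 0 ∨ ε₂ = 1) →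
        ε₁ * ε₂ = 0 → (s', t') ∈ S n → s = ((ε₁ : ℝ) + s') / 2 → t = ((ε₂ : ℝ) + t') / 2 →
        ∃ A B : ℕ → ℤ, IsBinRepNat A s ∧ IsBinRepNat B t ∧
          ∀ m : ℕ, m ≤ n + 1 → A m * B m = 0 := by
      intro ε₁ ε₂ s' t' hε₁ hε₂ hεε hmem hse hte
      obtain ⟨A, B, hA, hB, hAB⟩ := ih s' t' hmem
      refine ⟨shiftA ε₁ A, shiftA ε₂ B, ?_, ?_, ?_⟩
      · rw [hse]; exact isBinRepNat_shift hA hε₁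
      · rw [hte]; exact isBinRepNat_shift hB hε₂
      · intro m hm
        cases m with
        | zero => simpa [shiftA] using hεε
        | succ k => simpa [shiftA] using hAB k (by omega)
    rcases h with (h | h) | h
    · obtain ⟨⟨s', t'⟩, hmem, hp⟩ := Set.mem_smul_set.mp h
      have hs : s = ((0 : ℤ) + s') / 2 := by
        have := congrArg Prod.fst hp; simp [Prod.smul_def] at this; push_cast; linarith
      have ht : t = ((0 : ℤ) + t') / 2 := by
        have := congrArg Prod.snd hp; simp [Prod.smul_def] at this; push_cast; linarith
      exact step 0 0 s' t' (Or.inl rfl) (Or.inl rfl) (by ring) hmem hs ht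
    · obtain ⟨q, hq, hp⟩ := h
      obtain ⟨⟨s', t'⟩, hmem, hq'⟩ := Set.mem_smul_set.mp hq
      have hs : s = ((1 : ℤ) + s') / 2 := by
        have h1 := congrArg Prod.fst hp
        have h2 := congrArg Prod.fst hq'
        simp [Prod.smul_def] at h1 h2
        push_cast
        rw [← h1, ← h2]; ring
      have ht : t = ((0 : ℤ) + t') / 2 := by
        have h1 := congrArg Prod.snd hp
        have h2 := congrArg Prod.snd hq'
        simp [Prod.smul_def] at h1 h2
        push_cast
        rw [← h1, ← h2]; ring
      exact step 1 0 s' t' (Or.inr rfl) (Or.inl rfl) (by ring) hmem hs ht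
    · obtain ⟨q, hq, hp⟩ := h
      obtain ⟨⟨s', t'⟩, hmem, hq'⟩ := Set.mem_smul_set.mp hq
      have hs : s = ((0 : ℤ) + s') / 2 := by
        have h1 := congrArg Prod.fst hp
        have h2 := congrArg Prod.fst hq'
        simp [Prod.smul_def] at h1 h2
        push_cast
        rw [← h1, ← h2]; ring
      have ht : t = ((1 : ℤ) + t') / 2 := by
        have h1 := congrArg Prod.snd hp
        have h2 := congrArg Prod.snd hq'
        simp [Prod.smul_def] at h1 h2
        push_cast
        rw [← h1, ← h2]; ring
      exact step 0 1 s' t' (Or.inl rfl) (Or.inr rfl) (by ring) hmem hs ht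

theorem stmt7 (n : ℕ) (s t : ℝ) (h : (s, t) ∈ S n) :
    ∃ a b : ℕ+ → ℤ, IsBinRep a s ∧ IsBinRep b t ∧
      ∀ j : ℕ+, (j : ℕ) ≤ n + 1 → a j * b j = 0 := by
  obtain ⟨A, B, hA, hB, hAB⟩ := aux n s t h
  refine ⟨toRep A, toRep B, isBinRep_toRep hA, isBinRep_toRep hB, ?_⟩
  intro j hj
  have : j.natPred ≤ n := by
    have := j.one_le
    simp [PNat.natPred]
    omega
  exact hAB j.natPred this
end

section
/- For every n ≥ 0, the set S n contains every point (s,t) ∈ [0,1] × [0,1] for which there exist binary representations a of s and b of t satisfying a_j · b_j = 0 for all j ≤ n + 1 and a_j = b_j = 0 for all j ≥ n + 2. -/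
open scoped Pointwise

lemma tsum_rep (a : ℕ+ → ℤ) (m : ℕ) (h0 : ∀ j : ℕ+, m + 1 ≤ (j : ℕ) → a j = 0) :
    ∑' j : ℕ+, (a j : ℝ) / 2 ^ (j : ℕ)
      = ∑ k ∈ Finset.range m, (a ⟨k + 1, k.succ_pos⟩ : ℝ) / 2 ^ (k + 1) := by
  have h1 : ∑' j : ℕ+, (a j : ℝ) / 2 ^ (j : ℕ)
      = ∑ j ∈ (Finset.range m).image (fun k => (⟨k + 1, k.succ_pos⟩ : ℕ+)),
          (a j : ℝ) / 2 ^ (j : ℕ) := by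
    apply tsum_eq_sum
    intro j hj
    have hm : m + 1 ≤ (j : ℕ) := by
      by_contra h
      push_neg at h
      apply hj
      refine Finset.mem_image.mpr ?_; simp only [Finset.mem_range]
      exact ⟨(j : ℕ) - 1, by have := j.pos; omega, by
        apply PNat.coe_injective; have := j.pos; simp; omega⟩
    simp [h0 j hm]
  rw [h1, Finset.sum_image (by intro x _ y _ h; simpa using congrArg (fun j : ℕ+ => (j : ℕ)) h)]

lemma geo (m : ℕ) : ∑ k ∈ Finset.range m, (1 : ℝ) / 2 ^ (k + 1) = 1 - 1 / 2 ^ m := by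
  induction m with
  | zero => simp
  | succ m ih =>
    rw [Finset.sum_range_succ, ih, pow_succ]
    have : (0:ℝ) < 2 ^ m := by positivity
    field_simp
    ring

theorem stmt8 (n : ℕ) (s t : ℝ) (hs : s ∈ Set.Icc (0 : ℝ) 1) (ht : t ∈ Set.Icc (0 : ℝ) 1)
    (a b : ℕ+ → ℤ) (ha : IsBinRep a s) (hb : IsBinRep b t)
    (hab : ∀ j : ℕ+, (j : ℕ) ≤ n + 1 → a j * b j = 0)
    (hzero : ∀ j : ℕ+, n + 2 ≤ (j : ℕ) → a j = 0 ∧ b j = 0) :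
    (s, t) ∈ S n := by
  induction n generalizing s t a b with
  | zero =>
    have hsa : s = (a 1 : ℝ) / 2 := by
      rw [ha.2, tsum_rep a 1 (fun j hj => (hzero j hj).1)]
      simp
    have htb : t = (b 1 : ℝ) / 2 := by
      rw [hb.2, tsum_rep b 1 (fun j hj => (hzero j hj).2)]
      simp
    have hsle : s ≤ 1 / 2 := by
      rw [hsa]; rcases ha.1 1 with h | h <;> rw [h] <;> norm_num
    have htle : t ≤ 1 / 2 := by
      rw [htb]; rcases hb.1 1 with h | h <;> rw [h] <;> norm_num
    exact ⟨hs.1, ht.1, by dsimp; linarith⟩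
  | succ n ih =>
    set a' : ℕ+ → ℤ := fun j => a (j + 1) with ha'def
    set b' : ℕ+ → ℤ := fun j => b (j + 1) with hb'def
    have hco : ∀ (j : ℕ+), ((j + 1 : ℕ+) : ℕ) = (j : ℕ) + 1 := fun j => rfl
    have ha'0 : ∀ j : ℕ+, n + 2 + 1 ≤ (j : ℕ) → a' j = 0 := fun j hj =>
      (hzero (j + 1) (by rw [hco]; omega)).1
    have hb'0 : ∀ j : ℕ+, n + 2 + 1 ≤ (j : ℕ) → b' j = 0 := fun j hj =>
      (hzero (j + 1) (by rw [hco]; omega)).2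
    set s' : ℝ := ∑ k ∈ Finset.range (n + 2), (a' ⟨k + 1, k.succ_pos⟩ : ℝ) / 2 ^ (k + 1) with hs'def
    set t' : ℝ := ∑ k ∈ Finset.range (n + 2), (b' ⟨k + 1, k.succ_pos⟩ : ℝ) / 2 ^ (k + 1) with ht'def
    have key : ∀ (c : ℕ+ → ℤ), (∀ j : ℕ+, c j = 0 ∨ c j = 1) →
        (∑ k ∈ Finset.range (n + 2), (c ⟨k + 1, k.succ_pos⟩ : ℝ) / 2 ^ (k + 1)) ∈
          Set.Icc (0:ℝ) 1 := by
      intro c hc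
      constructor
      · apply Finset.sum_nonneg
        intro k _
        rcases hc ⟨k + 1, k.succ_pos⟩ with h | h <;> rw [h] <;> positivity
      · calc _ ≤ ∑ k ∈ Finset.range (n + 2), (1:ℝ) / 2 ^ (k + 1) := by
              apply Finset.sum_le_sum
              intro k _
              rcases hc ⟨k + 1, k.succ_pos⟩ with h | h <;> rw [h] <;> norm_num
          _ = 1 - 1 / 2 ^ (n + 2) := geo _
          _ ≤ 1 := by
              have h2 : (0:ℝ) ≤ 1 / 2 ^ (n + 2) := by positivity
              linarith
    have hrep_a : IsBinRep a' s' := ⟨fun j => ha.1 (j + 1), (tsum_rep a' (n + 2) ha'0).symm⟩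
    have hrep_b : IsBinRep b' t' := ⟨fun j => hb.1 (j + 1), (tsum_rep b' (n + 2) hb'0).symm⟩
    have ihm : (s', t') ∈ S n := by
      apply ih s' t' (key a' (fun j => ha.1 (j+1))) (key b' (fun j => hb.1 (j+1))) a' b'
        hrep_a hrep_b
      · intro j hj
        exact hab (j + 1) (by rw [hco]; omega)
      · intro j hj
        exact hzero (j + 1) (by rw [hco]; omega)
    have split : ∀ (c : ℕ+ → ℤ) (u : ℝ), IsBinRep c u →
        (∀ j : ℕ+, n + 1 + 2 ≤ (j : ℕ) → c j = 0) →
        u = (c 1 : ℝ) / 2 +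
          (∑ k ∈ Finset.range (n + 2), (c (⟨k + 1, k.succ_pos⟩ + 1) : ℝ) / 2 ^ (k + 1)) / 2 := by
      intro c u hcu hc0
      rw [hcu.2, tsum_rep c (n + 3) (fun j hj => hc0 j (by omega)),
        Finset.sum_range_succ', add_comm, Finset.sum_div]
      congr 1
      · norm_num
      · apply Finset.sum_congr rfl
        intro k _
        rw [div_div, ← pow_succ]
        congr 2
    have hs_eq : s = (a 1 : ℝ) / 2 + s' / 2 := split a s ha (fun j hj => (hzero j hj).1)
    have ht_eq : t = (b 1 : ℝ) / 2 + t' / 2 := split b t hb (fun j hj => (hzero j hj).2)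
    have h1 := hab 1 (by norm_num)
    show (s, t) ∈ S (n + 1)
    rw [S]
    rcases mul_eq_zero.mp h1 with h | h
    · rcases hb.1 1 with hb1 | hb1
      · -- a1 = 0, b1 = 0
        refine Or.inl (Or.inl ?_)
        refine ⟨(s', t'), ihm, ?_⟩
        rw [h] at hs_eq; rw [hb1] at ht_eq
        push_cast at hs_eq ht_eq
        simp only [Prod.smul_mk, smul_eq_mul, Prod.mk.injEq]
        constructor <;> linarith
      · -- a1 = 0, b1 = 1
        refine Or.inr ?_
        refine ⟨(1/2 : ℝ) • (s', t'), Set.smul_mem_smul_set ihm, ?_⟩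
        rw [h] at hs_eq; rw [hb1] at ht_eq
        push_cast at hs_eq ht_eq
        simp only [Prod.smul_mk, Prod.mk_add_mk, smul_eq_mul, Prod.mk.injEq]
        constructor <;> linarith
    · rcases ha.1 1 with ha1 | ha1
      · -- a1 = 0, b1 = 0
        refine Or.inl (Or.inl ?_)
        refine ⟨(s', t'), ihm, ?_⟩
        rw [ha1] at hs_eq; rw [h] at ht_eq
        push_cast at hs_eq ht_eq
        simp only [Prod.smul_mk, smul_eq_mul, Prod.mk.injEq]
        constructor <;> linarith
      · -- a1 = 1, b1 = 0
        refine Or.inl (Or.inr ?_)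
        refine ⟨(1/2 : ℝ) • (s', t'), Set.smul_mem_smul_set ihm, ?_⟩
        rw [ha1] at hs_eq; rw [h] at ht_eq
        push_cast at hs_eq ht_eq
        simp only [Prod.smul_mk, Prod.mk_add_mk, smul_eq_mul, Prod.mk.injEq]
        constructor <;> linarith
end

section
/- Let (s,t) ∈ [0,1] × [0,1]. If s and t admit (not necessarily finite) binary representations a and b such that a_j · b_j = 0 for every index j ≥ 1, then the point (s,t) lies in the Sierpinski triangle S_T. -/
open scoped Pointwise

lemma digit_nonneg_s9 {c : ℤ} (h : c = 0 ∨ c = 1) : (0:ℝ) ≤ (c:ℝ) := by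
  rcases h with h | h <;> simp [h]

lemma digit_le_one_s9 {c : ℤ} (h : c = 0 ∨ c = 1) : (c:ℝ) ≤ 1 := by
  rcases h with h | h <;> simp [h]

lemma summable_digits_s9 (a : ℕ → ℤ) (h : ∀ j, a j = 0 ∨ a j = 1) :
    Summable (fun n => (a n : ℝ) / 2 ^ (n+1)) := by
  refine Summable.of_nonneg_of_le (fun n => ?_) (fun n => ?_)
    (((summable_geometric_of_lt_one (by norm_num) (by norm_num : (1/2:ℝ) < 1))).mul_left (1/2))
  · have := digit_nonneg_s9 (h n); positivity
  · have h1 : (a n : ℝ) ≤ 1 := digit_le_one_s9 (h n)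
    have h2 : (0:ℝ) < 2 ^ (n+1) := by positivity
    rw [div_le_iff₀ h2]
    calc (a n : ℝ) ≤ 1 := h1
    _ = (1/2 * (1/2)^n) * 2^(n+1) := by
        rw [pow_succ]; field_simp; rw [← mul_pow]; norm_num
    _ ≤ _ := le_refl _

lemma tsum_half_pow : ∑' n : ℕ, (1:ℝ) / 2 ^ (n+1) = 1 := by
  have h : ∀ n : ℕ, (1:ℝ) / 2 ^ (n+1) = (1/2) * (1/2)^n := by
    intro n; rw [pow_succ]; field_simp; rw [← mul_pow]; norm_num
  simp only [h]
  rw [tsum_mul_left, tsum_geometric_of_lt_one (by norm_num) (by norm_num)]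
  norm_num

lemma mem_S_s9 (n : ℕ) : ∀ (a b : ℕ → ℤ), (∀ j, a j = 0 ∨ a j = 1) → (∀ j, b j = 0 ∨ b j = 1) →
    (∀ j, a j * b j = 0) →
    ((∑' k : ℕ, (a k : ℝ)/2^(k+1)), (∑' k : ℕ, (b k : ℝ)/2^(k+1))) ∈ S n := by
  induction n with
  | zero =>
    intro a b ha hb hab
    refine ⟨tsum_nonneg (fun k => by have := digit_nonneg_s9 (ha k); positivity),
            tsum_nonneg (fun k => by have := digit_nonneg_s9 (hb k); positivity), ?_⟩
    simp only
    rw [← Summable.tsum_add (summable_digits_s9 a ha) (summable_digits_s9 b hb)]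
    calc ∑' k : ℕ, ((a k : ℝ)/2^(k+1) + (b k : ℝ)/2^(k+1))
        ≤ ∑' k : ℕ, (1:ℝ)/2^(k+1) := by
          refine Summable.tsum_le_tsum (fun k => ?_)
            ((summable_digits_s9 a ha).add (summable_digits_s9 b hb))
            (by simpa using summable_digits_s9 (fun _ => 1) (fun _ => Or.inr rfl))
          rw [← add_div, div_le_div_iff_of_pos_right (by positivity)]
          have := hab k
          rcases ha k with h1 | h1 <;> rcases hb k with h2 | h2 <;>
            simp [h1, h2] at this ⊢ <;> norm_num
      _ = 1 := tsum_half_pow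
  | succ n ih =>
    intro a b ha hb hab
    set s' := ∑' k : ℕ, ((a (k+1) : ℝ))/2^(k+1) with hs'
    set t' := ∑' k : ℕ, ((b (k+1) : ℝ))/2^(k+1) with ht'
    have hmem := ih (fun k => a (k+1)) (fun k => b (k+1)) (fun k => ha (k+1))
      (fun k => hb (k+1)) (fun k => hab (k+1))
    have hsplit : ∀ (c : ℕ → ℤ), (∀ j, c j = 0 ∨ c j = 1) →
        ∑' k : ℕ, (c k : ℝ)/2^(k+1) = (c 0 : ℝ)/2 + (1/2) * ∑' k : ℕ, (c (k+1) : ℝ)/2^(k+1) := by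
      intro c hc
      rw [Summable.tsum_eq_zero_add (summable_digits_s9 c hc)]
      congr 1
      · norm_num
      · rw [← tsum_mul_left]
        congr 1; funext k
        rw [pow_succ]; ring
    have hsa := hsplit a ha
    have hsb := hsplit b hb
    have key : ∀ x y : ℝ, ((1/2 : ℝ) * x, (1/2 : ℝ) * y) ∈ (1/2 : ℝ) • S n →
        True := fun _ _ _ => trivial
    have hhalf : ((1/2 : ℝ) * s', (1/2 : ℝ) * t') ∈ (1/2 : ℝ) • S n := by
      have := Set.smul_mem_smul_set (a := (1/2 : ℝ)) hmem
      simpa [Prod.smul_mk, smul_eq_mul] using this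
    rw [hsa, hsb]
    show _ ∈ ((1 / 2 : ℝ) • S n) ∪ _ ∪ _
    rcases ha 0 with h1 | h1 <;> rcases hb 0 with h2 | h2
    · left; left
      simpa [h1, h2] using hhalf
    · right
      refine ⟨((1/2:ℝ)*s', (1/2:ℝ)*t'), hhalf, ?_⟩
      rw [← hs', ← ht']
      simp [h1, h2, Prod.ext_iff]; ring
    · left; right
      refine ⟨((1/2:ℝ)*s', (1/2:ℝ)*t'), hhalf, ?_⟩
      rw [← hs', ← ht']
      simp [h1, h2, Prod.ext_iff]; ring
    · exfalso; have := hab 0; rw [h1, h2] at this; norm_num at this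

theorem stmt9 (s t : ℝ) (hs : s ∈ Set.Icc (0 : ℝ) 1) (ht : t ∈ Set.Icc (0 : ℝ) 1)
    (a b : ℕ+ → ℤ) (ha : IsBinRep a s) (hb : IsBinRep b t)
    (hab : ∀ j : ℕ+, a j * b j = 0) :
    (s, t) ∈ sierpinskiT := by
  have hconv : ∀ (c : ℕ+ → ℤ),
      ∑' j : ℕ+, (c j : ℝ) / 2 ^ (j : ℕ) = ∑' k : ℕ, (c k.succPNat : ℝ) / 2 ^ (k+1) := by
    intro c
    rw [← Equiv.tsum_eq Equiv.pnatEquivNat.symm (fun j : ℕ+ => (c j : ℝ) / 2 ^ (j : ℕ))]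
    refine tsum_congr fun k => ?_
    simp [Equiv.pnatEquivNat, Nat.succPNat]
  obtain ⟨hda, hsa⟩ := ha
  obtain ⟨hdb, hsb⟩ := hb
  have hs' : s = ∑' k : ℕ, (a k.succPNat : ℝ) / 2 ^ (k+1) := by rw [hsa, hconv]
  have ht' : t = ∑' k : ℕ, (b k.succPNat : ℝ) / 2 ^ (k+1) := by rw [hsb, hconv]
  rw [hs', ht']
  exact Set.mem_iInter.mpr fun n => mem_S_s9 n (fun k => a k.succPNat) (fun k => b k.succPNat)
    (fun k => hda _) (fun k => hdb _) (fun k => hab _)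
end

section
/- Every proper fraction is an Egyptian fraction with at most p terms: for all integers p, q with 0 < p < q, there exist an integer k with 1 ≤ k ≤ p and distinct positive integers n_1 < n_2 < ... < n_k such that p/q = ∑_{i=1}^{k} 1/n_i (as rational numbers). -/
theorem aux18 : ∀ P : ℕ, ∀ q : ℤ, 0 < (P:ℤ) → (P:ℤ) < q →
    ∃ (k : ℕ) (n : ℕ → ℤ), 1 ≤ k ∧ (k:ℤ) ≤ (P:ℤ) ∧ (∀ i, i < k → 0 < n i) ∧
      (∀ i j, i < j → j < k → n i < n j) ∧
      ((P:ℤ):ℚ) / (q:ℚ) = ∑ i ∈ Finset.range k, 1 / (n i : ℚ) := by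
  intro P
  induction P using Nat.strong_induction_on with
  | _ P ih =>
    intro q hP hq
    set p : ℤ := (P:ℤ) with hpdef
    set n₀ : ℤ := (q + p - 1) / p with hn₀
    have hmod : p * n₀ + (q + p - 1) % p = q + p - 1 := by
      rw [hn₀]; exact Int.mul_ediv_add_emod (q + p - 1) p
    have hmn : 0 ≤ (q+p-1) % p := Int.emod_nonneg _ (by omega)
    have hml : (q+p-1) % p < p := Int.emod_lt_of_pos _ hP
    have h1 : q ≤ p * n₀ := by omega
    have h2 : p * n₀ < q + p := by omega
    have hn2 : 2 ≤ n₀ := by nlinarith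
    have hq0 : (0:ℚ) < (q:ℚ) := by exact_mod_cast (by omega : (0:ℤ) < q)
    have hn0Q : (0:ℚ) < (n₀:ℚ) := by exact_mod_cast (by omega : (0:ℤ) < n₀)
    set p' : ℤ := p * n₀ - q with hp'def
    by_cases hp0 : p' = 0
    · refine ⟨1, fun _ => n₀, le_refl 1, by exact_mod_cast hP, fun i _ => (by omega : (0:ℤ) < n₀),
        fun i j hij hj => by omega, ?_⟩
      rw [Finset.sum_range_one]
      have : p * n₀ = q := by omega
      have hQ : (p:ℚ) * (n₀:ℚ) = (q:ℚ) := by exact_mod_cast this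
      field_simp
      linarith
    · have hp'pos : 0 < p' := by omega
      have hp'lt : p' < p := by omega
      have hcast : ((p'.toNat : ℤ)) = p' := Int.toNat_of_nonneg (by omega)
      have hq' : p' < q * n₀ := by nlinarith
      obtain ⟨k, m, hk1, hkle, hpos, hmono, hsum⟩ :=
        ih p'.toNat (by omega) (q * n₀) (by rw [hcast]; omega) (by rw [hcast]; omega)
      rw [hcast] at hkle hsum
      -- each denominator m i exceeds n₀
      have hqn0 : (0:ℚ) < ((q * n₀ : ℤ):ℚ) := by
        exact_mod_cast (by nlinarith : (0:ℤ) < q * n₀)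
      have hbig : ∀ i, i < k → n₀ < m i := by
        intro i hi
        have hterm : (1:ℚ) / (m i : ℚ) ≤ (p':ℚ) / ((q * n₀ : ℤ):ℚ) := by
          rw [hsum]
          exact Finset.single_le_sum (f := fun j => 1 / (m j : ℚ))
            (fun j hj => by
              have : (0:ℚ) < (m j:ℚ) := by exact_mod_cast hpos j (Finset.mem_range.mp hj)
              positivity) (Finset.mem_range.mpr hi)
        have hlt : (p':ℚ) / ((q * n₀ : ℤ):ℚ) < 1 / (n₀:ℚ) := by
          rw [div_lt_div_iff₀ hqn0 hn0Q]
          push_cast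
          have : p' < q := by omega
          have : (p':ℚ) < (q:ℚ) := by exact_mod_cast this
          nlinarith
        have hmiQ : (0:ℚ) < (m i : ℚ) := by exact_mod_cast hpos i hi
        have := lt_of_le_of_lt hterm hlt
        rw [div_lt_div_iff₀ hmiQ hn0Q] at this
        have h' : (n₀:ℚ) < (m i : ℚ) := by linarith
        exact_mod_cast h'
      refine ⟨k + 1, fun i => if i = 0 then n₀ else m (i - 1), Nat.le_add_left 1 k,
        by push_cast; omega, ?_, ?_, ?_⟩
      · intro i hi
        by_cases h : i = 0
        · simp [h]; omega
        · simp only [h, if_neg]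
          exact hpos (i-1) (by omega)
      · intro i j hij hj
        by_cases h : i = 0
        · have hjne : j ≠ 0 := by omega
          simp only [h, hjne, if_pos, if_neg, ite_true, ite_false]
          exact hbig (j-1) (by omega)
        · have hjne : j ≠ 0 := by omega
          simp only [h, hjne, ite_false]
          exact hmono (i-1) (j-1) (by omega) (by omega)
      · rw [Finset.sum_range_succ']
        simp only [Nat.add_sub_cancel, Nat.succ_ne_zero, ite_false, ite_true, if_pos rfl]
        have : (∑ i ∈ Finset.range k, 1 / (m i : ℚ)) = (p':ℚ) / ((q*n₀ : ℤ):ℚ) := hsum.symm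
        rw [this]
        have hp'Q : (p':ℚ) = (p:ℚ) * (n₀:ℚ) - (q:ℚ) := by
          rw [hp'def]; push_cast; ring
        push_cast
        rw [hp'Q]
        field_simp
        ring

theorem stmt18 (p q : ℤ) (hp : 0 < p) (hpq : p < q) :
    ∃ (k : ℕ) (n : ℕ → ℤ), 1 ≤ k ∧ (k : ℤ) ≤ p ∧
      (∀ i, i < k → 0 < n i) ∧
      (∀ i j, i < j → j < k → n i < n j) ∧
      (p : ℚ) / (q : ℚ) = ∑ i ∈ Finset.range k, 1 / (n i : ℚ) := by
  have hcast : ((p.toNat : ℤ)) = p := Int.toNat_of_nonneg (by omega)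
  have := aux18 p.toNat q (by rw [hcast]; omega) (by rw [hcast]; omega)
  rw [hcast] at this
  exact this
end
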